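/- arXiv:2201.13327 — 2 statements merged into one kernel-verified Lean document; each statement's English description precedes it below -/
import Mathlib

section
/- Let A be an infinite finitely generated abelian group. Then RF_A(n) ⪯ log(n), i.e., there is a constant C such that every nontrivial element a ∈ A of word length at most n can be separated from the identity in a finite quotient of A of order at most C·log(C·n). -/
/-!
An infinite-order element `a` is detected by a homomorphism `f : A → ℤ` whose value grows at most
linearly in the word length `n` of `a`. The least common multiple `lcmUpto K` of `1, …, K` is at
least `2 ^ K / (K + 1)`, so not all of `1, …, K` divide `f a ≠ 0` once `K ≈ 2 log₂ |f a|`; reducing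
`f` modulo such a non-divisor `k` separates `a` in the quotient `ℤ/k` of order `O(log n)`. A torsion
element survives in the finite torsion part of `A`, whose order is a constant.
-/

noncomputable def wordLen {A : Type*} [Group A] (S : Set A) (a : A) : ℕ :=
  sInf {n | ∃ l : List A, (∀ x ∈ l, x ∈ S ∨ x⁻¹ ∈ S) ∧ l.prod = a ∧ l.length = n}

namespace Nat

theorem exists_mem_Icc_not_dvd_of_lt_lcmUpto {m K : ℕ} (hm : 0 < m) (h : m < lcmUpto K) :
    ∃ k ∈ Finset.Icc 1 K, ¬ k ∣ m := by
  by_contra! hdvd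
  exact h.not_ge (le_of_dvd hm (Finset.lcm_dvd fun k hk => hdvd k hk))

theorem lt_lcmUpto_two_mul_log_add_eight (m : ℕ) : m < lcmUpto (2 * Nat.log 2 m + 8) := by
  set s := Nat.log 2 m + 4
  have hlcm : 2 ^ (2 * s) ≤ (2 * s + 1) * lcmUpto (2 * s) := Chebyshev.two_pow_le_mul_lcmUpto _
  have hm : 8 * m < 2 ^ s := by
    have := lt_pow_succ_log_self one_lt_two m
    rw [show s = Nat.log 2 m + 1 + 3 by omega, pow_add]
    omega
  have hs : s < 2 ^ s := Nat.lt_two_pow_self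
  rw [show 2 * Nat.log 2 m + 8 = 2 * s by omega]
  rw [pow_mul', sq] at hlcm
  by_contra! h
  nlinarith

end Nat

section WordLength

variable {A : Type*} [Group A] {S : Set A}

theorem exists_list_prod_eq_length_eq_wordLen (hS : Subgroup.closure S = ⊤) (a : A) :
    ∃ l : List A, (∀ x ∈ l, x ∈ S ∨ x⁻¹ ∈ S) ∧ l.prod = a ∧ l.length = wordLen S a := by
  have ha : a ∈ Submonoid.closure (S ∪ S⁻¹) := by
    rw [← Subgroup.closure_toSubmonoid, hS]
    trivial
  obtain ⟨l, hl, hla⟩ := Submonoid.exists_list_of_mem_closure ha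
  exact Nat.sInf_mem
    (s := {n | ∃ l : List A, (∀ x ∈ l, x ∈ S ∨ x⁻¹ ∈ S) ∧ l.prod = a ∧ l.length = n})
    ⟨l.length, l, hl, hla, rfl⟩

theorem one_le_wordLen (hS : Subgroup.closure S = ⊤) {a : A} (ha : a ≠ 1) :
    1 ≤ wordLen S a := by
  obtain ⟨l, -, rfl, hl⟩ := exists_list_prod_eq_length_eq_wordLen hS a
  rw [← hl, Nat.one_le_iff_ne_zero, Ne, List.length_eq_zero_iff]
  rintro rfl
  exact ha List.prod_nil

theorem natAbs_le_mul_wordLen (hS : Subgroup.closure S = ⊤) (f : Additive A →+ ℤ) {B : ℕ}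
    (hB : ∀ s ∈ S, (f (.ofMul s)).natAbs ≤ B) (a : A) :
    (f (.ofMul a)).natAbs ≤ B * wordLen S a := by
  obtain ⟨l, hl, rfl, hlen⟩ := exists_list_prod_eq_length_eq_wordLen hS a
  rw [← hlen]
  clear hlen
  induction l with
  | nil => simp
  | cons x l ih =>
    have hx : (f (.ofMul x)).natAbs ≤ B := by
      rcases hl x List.mem_cons_self with hx | hx
      · exact hB x hx
      · simpa using hB _ hx
    calc (f (.ofMul (x :: l).prod)).natAbs
        = (f (.ofMul x) + f (.ofMul l.prod)).natAbs := by rw [List.prod_cons, ofMul_mul, map_add]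
      _ ≤ B + B * l.length :=
        (Int.natAbs_add_le _ _).trans (add_le_add hx (ih fun y hy => hl y (.tail x hy)))
      _ = B * (x :: l).length := by rw [List.length_cons]; ring

end WordLength

theorem MonoidHom.exists_separating_quotient_card_le {A M : Type*} [Group A] [Group M] [Finite M]
    (φ : A →* M) {a : A} (ha : φ a ≠ 1) :
    ∃ N : Subgroup A, N.Normal ∧ N.FiniteIndex ∧ a ∉ N ∧ Nat.card (A ⧸ N) ≤ Nat.card M :=
  ⟨φ.ker, inferInstance, inferInstance, ha,
    (Subgroup.index_ker φ).trans_le (Nat.card_le_card_of_injective _ Subtype.val_injective)⟩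

theorem exists_separating_quotient_card_le_log_of_int_hom {A : Type*} [Group A]
    (f : Additive A →+ ℤ) {a : A} (ha : f (.ofMul a) ≠ 0) :
    ∃ N : Subgroup A, N.Normal ∧ N.FiniteIndex ∧ a ∉ N ∧
      Nat.card (A ⧸ N) ≤ 2 * Nat.log 2 (f (.ofMul a)).natAbs + 8 := by
  obtain ⟨k, hk, hdvd⟩ := Nat.exists_mem_Icc_not_dvd_of_lt_lcmUpto (Int.natAbs_pos.mpr ha)
    (Nat.lt_lcmUpto_two_mul_log_add_eight _)
  rw [Finset.mem_Icc] at hk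
  have : NeZero k := ⟨by omega⟩
  have hψ : AddMonoidHom.toMultiplicativeRight ((Int.castAddHom (ZMod k)).comp f) a ≠ 1 := by
    rw [Ne, ← toAdd_eq_zero]
    simpa [ZMod.intCast_zmod_eq_zero_iff_dvd, Int.natCast_dvd] using hdvd
  obtain ⟨N, hN, hNfin, haN, hcard⟩ := MonoidHom.exists_separating_quotient_card_le _ hψ
  refine ⟨N, hN, hNfin, haN, hcard.trans ?_⟩
  rw [Nat.card_congr Multiplicative.toAdd, Nat.card_zmod]
  exact hk.2

theorem AddCommGroup.exists_separating_int_homs_and_finite_hom (G : Type*) [AddCommGroup G]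
    [AddGroup.FG G] :
    ∃ (r : ℕ) (T : Type) (_ : AddCommGroup T) (_ : Finite T) (f : Fin r → G →+ ℤ) (t : G →+ T),
      ∀ g, (∀ i, f i g = 0) → t g = 0 → g = 0 := by
  obtain ⟨r, ι, _, p, hp, e, ⟨eqv⟩⟩ := AddCommGroup.equiv_free_prod_directSum_zmod G
  have : ∀ i, NeZero (p i ^ e i) := fun i => ⟨pow_ne_zero _ (hp i).ne_zero⟩
  refine ⟨r, _, inferInstance, Finite.of_injective _ DFunLike.coe_injective,
    fun i => (Finsupp.applyAddHom i).comp ((AddMonoidHom.fst _ _).comp eqv.toAddMonoidHom),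
    (AddMonoidHom.snd _ _).comp eqv.toAddMonoidHom, fun g hf ht => ?_⟩
  apply eqv.injective
  simp only [map_zero]
  exact Prod.ext (Finsupp.ext hf) ht

theorem stmt3_general {A : Type*} [CommGroup A] (S : Finset A)
    (hgen : Subgroup.closure (S : Set A) = ⊤) :
    ∃ C : ℕ, 0 < C ∧ ∀ (n : ℕ) (a : A), a ≠ 1 → wordLen (S : Set A) a ≤ n →
      ∃ N : Subgroup A, N.Normal ∧ N.FiniteIndex ∧ a ∉ N ∧
        Nat.card (A ⧸ N) ≤ C * Nat.log 2 (C * n) := by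
  have : AddGroup.FG (Additive A) := GroupFG.iff_add_fg.mp ⟨⟨S, hgen⟩⟩
  obtain ⟨r, T, _, _, f, t, hsep⟩ :=
    AddCommGroup.exists_separating_int_homs_and_finite_hom (Additive A)
  set B := Finset.univ.sup fun i => S.sup fun s => (f i (.ofMul s)).natAbs
  have hB : ∀ i, ∀ s ∈ (S : Set A), (f i (.ofMul s)).natAbs ≤ B := fun i s hs =>
    Finset.le_sup_of_le (Finset.mem_univ i)
      (Finset.le_sup (f := fun s => (f i (.ofMul s)).natAbs) hs)
  set C := B + Nat.card T + 10 with hC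
  refine ⟨C, by omega, fun n a ha hlen => ?_⟩
  have hlog : 1 ≤ Nat.log 2 (C * n) :=
    Nat.log_pos one_lt_two (by nlinarith [one_le_wordLen hgen ha])
  by_cases h : ∀ i, f i (.ofMul a) = 0
  · have ht : AddMonoidHom.toMultiplicativeRight t a ≠ 1 := fun ht => ha (hsep _ h ht)
    obtain ⟨N, hN, hNfin, haN, hcard⟩ := MonoidHom.exists_separating_quotient_card_le _ ht
    refine ⟨N, hN, hNfin, haN, hcard.trans ?_⟩
    rw [Nat.card_congr Multiplicative.toAdd]
    nlinarith
  · obtain ⟨i, hi⟩ := not_forall.mp h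
    obtain ⟨N, hN, hNfin, haN, hcard⟩ := exists_separating_quotient_card_le_log_of_int_hom (f i) hi
    refine ⟨N, hN, hNfin, haN, hcard.trans ?_⟩
    grw [natAbs_le_mul_wordLen hgen (f i) (hB i) a, hlen, show B ≤ C by omega]
    nlinarith

/-- for an infinite finitely generated abelian group `A`,
`RF_A(n) ⪯ log n`: there is `C > 0` such that every nontrivial element of word
length at most `n` dies in no finite quotient of order at most `C·log(C·n)`,
i.e. it is separated from the identity in a finite quotient of `A` of order at
most `C · log (C · n)`. -/
theorem stmt3 {A : Type*} [CommGroup A] [Infinite A] (S : Finset A)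
    (hgen : Subgroup.closure (S : Set A) = ⊤) :
    ∃ C : ℕ, 0 < C ∧ ∀ (n : ℕ) (a : A), a ≠ 1 → wordLen (S : Set A) a ≤ n →
      ∃ N : Subgroup A, N.Normal ∧ N.FiniteIndex ∧ a ∉ N ∧
        Nat.card (A ⧸ N) ≤ C * Nat.log 2 (C * n) :=
  stmt3_general S hgen
end

section
/- Let G be a finitely generated conjugacy separable group, α an automorphism of G not inner, and w ∈ G an element with α(w) not conjugate to w. Then there exists a characteristic finite-index subgroup K ≤ G such that wK is not conjugate to α(w)K in G/K; hence the induced automorphism ᾱ of G/K is not inner, i.e. ᾱ ∉ Inn(G/K), so the image of [α] in Out(G/K) is nontrivial. -/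
lemma finite_homs {G P : Type*} [Group G] [Group P] (hFG : Group.FG G) [Finite P] :
    Finite (G →* P) := by
  obtain ⟨S, hS, hSfin⟩ := Group.fg_iff.mp hFG
  haveI : Finite S := hSfin
  exact Finite.of_injective (fun f : G →* P => fun s : S => f s) (by
    intro f g h
    refine MonoidHom.eq_of_eqOn_dense hS ?_
    intro x hx
    exact congrFun h ⟨x, hx⟩)

noncomputable def permHomOf {G : Type*} [Group G] {n : ℕ} (H : Subgroup G)
    (e : G ⧸ H ≃ Fin n) : G →* Equiv.Perm (Fin n) :=
  MonoidHom.mk' (fun g => e.permCongr (MulAction.toPermHom G (G ⧸ H) g)) (by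
    intro a b
    ext x
    simp [Equiv.permCongr_apply, mul_smul])

lemma permHomOf_mem {G : Type*} [Group G] {n : ℕ} (H : Subgroup G)
    (e : G ⧸ H ≃ Fin n) (g : G) :
    g ∈ H ↔ permHomOf H e g (e ((1 : G) : G ⧸ H)) = e ((1 : G) : G ⧸ H) := by
  have : permHomOf H e g (e ((1 : G) : G ⧸ H)) = e (g • ((1 : G) : G ⧸ H)) := by
    simp [permHomOf, Equiv.permCongr_apply]
  rw [this, Equiv.apply_eq_iff_eq]
  have h2 : g • ((1 : G) : G ⧸ H) = ((g : G) : G ⧸ H) := by simp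
  rw [h2, QuotientGroup.eq]
  simp

lemma finite_index_set {G : Type*} [Group G] (hFG : Group.FG G) {n : ℕ} (hn : n ≠ 0) :
    Finite {H : Subgroup G | H.index = n} := by
  haveI : Finite (G →* Equiv.Perm (Fin n)) := finite_homs hFG
  have hcard : ∀ H : {H : Subgroup G | H.index = n}, Nat.card (G ⧸ (H : Subgroup G)) = n :=
    fun ⟨H, hH⟩ => hH
  haveI : ∀ H : {H : Subgroup G | H.index = n}, Finite (G ⧸ (H : Subgroup G)) := by
    intro H
    exact Nat.finite_of_card_ne_zero (by rw [hcard H]; exact hn)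
  let e : ∀ H : {H : Subgroup G | H.index = n}, G ⧸ (H : Subgroup G) ≃ Fin n :=
    fun H => Finite.equivFinOfCardEq (hcard H)
  refine Finite.of_injective
    (fun H => (permHomOf (H : Subgroup G) (e H), e H ((1 : G) : G ⧸ (H : Subgroup G)))) ?_
  rintro ⟨H, hH⟩ ⟨H', hH'⟩ h
  simp only [Prod.mk.injEq] at h
  obtain ⟨h1, h2⟩ := h
  have : H = H' := by
    ext g
    rw [permHomOf_mem H (e ⟨H, hH⟩) g, permHomOf_mem H' (e ⟨H', hH'⟩) g, h1, h2]
  exact Subtype.ext this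

/-- let `G` be a finitely generated conjugacy separable group, `α` a
non-inner automorphism of `G`, and `w ∈ G` with `α(w)` not conjugate to `w`. Then
there is a characteristic finite-index subgroup `K ≤ G` such that `wK` is not
conjugate to `α(w)K` in `G/K`, and the automorphism of `G/K` induced by `α` is not
inner (so the image of `[α]` in `Out(G/K)` is nontrivial).

Here `wK` being conjugate to `α(w)K` in `G/K` is expressed as
`∃ k, (k w k⁻¹)⁻¹ · α(w) ∈ K`, and the induced automorphism being inner as
`∃ q, ∀ g, (q g q⁻¹)⁻¹ · α(g) ∈ K`. -/
theorem stmt14 {G : Type*} [Group G] (hFG : Group.FG G)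
    (hcs : ∀ g h : G, ¬ IsConj g h → ∃ N : Subgroup G, N.Normal ∧ N.FiniteIndex ∧
      ¬ ∃ k : G, (k * g * k⁻¹)⁻¹ * h ∈ N)
    (α : MulAut G) (hα : ¬ ∃ g : G, α = MulAut.conj g)
    (w : G) (hw : ¬ IsConj w (α w)) :
    ∃ K : Subgroup G, K.Characteristic ∧ K.FiniteIndex ∧
      (¬ ∃ k : G, (k * w * k⁻¹)⁻¹ * α w ∈ K) ∧
      (¬ ∃ q : G, ∀ g : G, (q * g * q⁻¹)⁻¹ * α g ∈ K) := by
  obtain ⟨N, hNnorm, hNfin, hNsep⟩ := hcs w (α w) hw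
  set n := N.index with hn
  have hn0 : n ≠ 0 := hNfin.index_ne_zero
  haveI : Finite {H : Subgroup G | H.index = n} := finite_index_set hFG hn0
  set K : Subgroup G := ⨅ H : {H : Subgroup G | H.index = n}, (H : Subgroup G) with hK
  have hKle : ∀ H : Subgroup G, H.index = n → K ≤ H := by
    intro H hH
    exact iInf_le (fun H : {H : Subgroup G | H.index = n} => (H : Subgroup G)) ⟨H, hH⟩
  have hKN : K ≤ N := hKle N rfl
  have hchar : K.Characteristic := by
    rw [Subgroup.characteristic_iff_le_comap]
    intro φ
    rw [hK, Subgroup.comap_iInf]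
    refine le_iInf ?_
    rintro ⟨H, hH⟩
    have : (H.comap φ.toMonoidHom).index = n := by
      rw [Subgroup.index_comap_of_surjective _ φ.surjective]; exact hH
    exact hKle _ this
  have hKfin : K.FiniteIndex := by
    constructor
    refine Subgroup.index_iInf_ne_zero ?_
    rintro ⟨H, hH⟩
    rw [show (H : Subgroup G).index = n from hH]
    exact hn0
  have h3 : ¬ ∃ k : G, (k * w * k⁻¹)⁻¹ * α w ∈ K := by
    rintro ⟨k, hk⟩
    exact hNsep ⟨k, hKN hk⟩
  exact ⟨K, hchar, hKfin, h3, fun ⟨q, hq⟩ => h3 ⟨q, hq w⟩⟩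
end
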